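/- (Configuration E, first pair.) Let ŵ ∈ S_N, regarded as a bijection {1,…,N} → {1,…,n₁}×{1,…,n₂}. Suppose there are k ∈ {1,…,N−2}, i ∈ {1,…,n₁−2}, j ∈ {1,…,n₂} such that ŵ(k) = (i,j), ŵ(k+1) = (i+1,j), ŵ(k+2) = (i+2,j). Let v ∈ W be determined by v⁻¹ = ((i i+1 i+2), 1) and let v̂ ∈ S_N be determined by v̂⁻¹ = ŵ·(k k+1 k+2)·ŵ₀, where (a b c) denotes the 3-cycle a ↦ b ↦ c ↦ a. Then ŵ·Φ̂(((v̂ŵ)^∨)⁻¹) = {ε̂_{(i+1,j)} − ε̂_{(i,j)}, ε̂_{(i+2,j)} − ε̂_{(i,j)}}, Φ(v⁻¹) = {ε_{i+1} − ε_i, ε_{i+2} − ε_i}, and ρ restricts to a bijection from ŵ·Φ̂(((v̂ŵ)^∨)⁻¹) onto Φ(v⁻¹). -/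
import Mathlib


open Equiv

/-- The weight lattice `L = ℤ^{n₁} × ℤ^{n₂}` of `GL(n₁) × GL(n₂)`. -/
abbrev L (n₁ n₂ : ℕ) : Type := (Fin n₁ → ℤ) × (Fin n₂ → ℤ)

/-- The weight lattice `L̂ = ℤ^N` of `GL(N)`. -/
abbrev Lhat (N : ℕ) : Type := Fin N → ℤ

/-- The standard basis vector `ε_a` of the first factor of `L`. -/
def eps {n₁ n₂ : ℕ} (a : Fin n₁) : L n₁ n₂ := (Pi.single a 1, 0)

/-- The standard basis vector `η_c` of the second factor of `L`. -/
def eta {n₁ n₂ : ℕ} (c : Fin n₂) : L n₁ n₂ := (0, Pi.single c 1)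

/-- The standard basis vector `ε̂_p` of `L̂`. -/
def epsHat {N : ℕ} (p : Fin N) : Lhat N := Pi.single p 1

/-- The lexicographic identification of `{1,…,n₁} × {1,…,n₂}` with `{1,…,n₁n₂}`,
`(i,j) ↦ (i-1)n₂ + j` in 1-based terms. -/
def lex {n₁ n₂ : ℕ} (i : Fin n₁) (j : Fin n₂) : Fin (n₁ * n₂) :=
  finProdFinEquiv (i, j)

/-- The action of `W = S_{n₁} × S_{n₂}` on `L`, characterised by
`u • ε_a = ε_{u₁ a}` and `u • η_c = η_{u₂ c}`. -/
def wAct {n₁ n₂ : ℕ} (u : Perm (Fin n₁) × Perm (Fin n₂)) (x : L n₁ n₂) : L n₁ n₂ :=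
  (x.1 ∘ u.1.symm, x.2 ∘ u.2.symm)

/-- The action of `Ŵ = S_N` on `L̂`, characterised by `û • ε̂_p = ε̂_{û p}`. -/
def hatAct {N : ℕ} (u : Perm (Fin N)) (x : Lhat N) : Lhat N := x ∘ u.symm

/-- The positive roots `Φ⁺` of `GL(n₁) × GL(n₂)`. -/
def PhiPos (n₁ n₂ : ℕ) : Set (L n₁ n₂) :=
  {x | ∃ a b : Fin n₁, a < b ∧ x = eps a - eps b} ∪
    {x | ∃ c d : Fin n₂, c < d ∧ x = eta c - eta d}

/-- The negative roots `Φ⁻ = -Φ⁺`. -/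
def PhiNeg (n₁ n₂ : ℕ) : Set (L n₁ n₂) := Neg.neg '' PhiPos n₁ n₂

/-- The inversion set `Φ(u) = Φ⁻ ∩ u · Φ⁺`. -/
def Phi {n₁ n₂ : ℕ} (u : Perm (Fin n₁) × Perm (Fin n₂)) : Set (L n₁ n₂) :=
  PhiNeg n₁ n₂ ∩ wAct u '' PhiPos n₁ n₂

/-- The positive roots `Φ̂⁺` of `GL(N)`. -/
def PhiHatPos (N : ℕ) : Set (Lhat N) :=
  {x | ∃ p q : Fin N, p < q ∧ x = epsHat p - epsHat q}

/-- The negative roots `Φ̂⁻ = -Φ̂⁺`. -/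
def PhiHatNeg (N : ℕ) : Set (Lhat N) := Neg.neg '' PhiHatPos N

/-- The inversion set `Φ̂(û) = Φ̂⁻ ∩ û · Φ̂⁺`. -/
def PhiHat {N : ℕ} (u : Perm (Fin N)) : Set (Lhat N) :=
  PhiHatNeg N ∩ hatAct u '' PhiHatPos N

/-- The longest element `ŵ₀ : k ↦ N + 1 - k` of `S_N`. -/
def w0 (N : ℕ) : Perm (Fin N) := Fin.revPerm

/-- The 3-cycle `(a b c)` sending `a ↦ b ↦ c ↦ a` (permutations composed right-to-left). -/
def cyc {α : Type*} [DecidableEq α] (a b c : α) : Perm α :=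
  Equiv.swap a b * Equiv.swap b c

/- ### Auxiliary lemmas -/

lemma single_sub_eq {n : ℕ} {a b c d : Fin n} (hab : a ≠ b)
    (h : (Pi.single a (1:ℤ) : Fin n → ℤ) - Pi.single b 1
       = (Pi.single c (1:ℤ) : Fin n → ℤ) - Pi.single d 1) :
    a = c ∧ b = d := by
  have ha := congrFun h a
  have hb := congrFun h b
  simp only [Pi.sub_apply, Pi.single_apply] at ha hb
  split_ifs at ha hb <;> simp_all

lemma single_sub_ne_zero {n : ℕ} {a b : Fin n} (hab : a ≠ b) :
    (Pi.single a (1:ℤ) : Fin n → ℤ) - Pi.single b 1 ≠ 0 := by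
  intro h
  have := congrFun h a
  simp [Pi.single_apply, hab] at this

lemma epsHat_sub_eq {n : ℕ} {a b c d : Fin n} (hab : a ≠ b)
    (h : epsHat a - epsHat b = epsHat c - epsHat d) : a = c ∧ b = d := by
  exact single_sub_eq hab h

lemma eps_sub_eq {n₁ n₂ : ℕ} {a b c d : Fin n₁} (hab : a ≠ b)
    (h : (eps a : L n₁ n₂) - eps b = eps c - eps d) : a = c ∧ b = d := by
  have h1 := congrArg Prod.fst h
  simp only [Prod.fst_sub, eps] at h1
  exact single_sub_eq hab h1

lemma eta_sub_eq {n₁ n₂ : ℕ} {a b c d : Fin n₂} (hab : a ≠ b)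
    (h : (eta a : L n₁ n₂) - eta b = eta c - eta d) : a = c ∧ b = d := by
  have h1 := congrArg Prod.snd h
  simp only [Prod.snd_sub, eta] at h1
  exact single_sub_eq hab h1

lemma cyc_coe {n : ℕ} {a a' a'' : Fin n} (h' : (a':ℕ) = a + 1) (h'' : (a'':ℕ) = a + 2)
    (x : Fin n) : ((cyc a a' a'' x : Fin n) : ℕ) =
      if (x:ℕ) = a then (a:ℕ)+1 else if (x:ℕ) = (a:ℕ)+1 then (a:ℕ)+2
        else if (x:ℕ) = (a:ℕ)+2 then a else x := by
  have h1 : a ≠ a' := by simp [Fin.ext_iff]; omega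
  have h2 : a' ≠ a'' := by simp [Fin.ext_iff]; omega
  have h3 : a ≠ a'' := by simp [Fin.ext_iff]; omega
  rcases eq_or_ne x a with rfl | hxa
  · simp [cyc, Perm.mul_apply, Equiv.swap_apply_of_ne_of_ne h1 h3, h']
  rcases eq_or_ne x a' with rfl | hxb
  · have hx1 : ((x:Fin n):ℕ) ≠ (a:ℕ) := by omega
    simp [cyc, Perm.mul_apply, Equiv.swap_apply_of_ne_of_ne h3.symm h2.symm, hx1, h', h'']
  rcases eq_or_ne x a'' with rfl | hxc
  · have hx1 : ((x:Fin n):ℕ) ≠ (a:ℕ) := by omega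
    have hx2 : ((x:Fin n):ℕ) ≠ (a:ℕ)+1 := by omega
    simp [cyc, Perm.mul_apply, Equiv.swap_apply_right,
      Equiv.swap_apply_of_ne_of_ne h1.symm, hx1, hx2, Equiv.swap_apply_left, h'']
  · have hxa' : (x:ℕ) ≠ (a:ℕ) := fun h => hxa (Fin.ext h)
    have hxb' : (x:ℕ) ≠ (a:ℕ)+1 := fun h => hxb (Fin.ext (by omega))
    have hxc' : (x:ℕ) ≠ (a:ℕ)+2 := fun h => hxc (Fin.ext (by omega))
    rw [show (cyc a a' a'') x = x from by
      simp [cyc, Perm.mul_apply, Equiv.swap_apply_of_ne_of_ne hxb hxc,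
        Equiv.swap_apply_of_ne_of_ne hxa hxb]]
    simp [hxa', hxb', hxc']

lemma cyc_fst {n : ℕ} {a a' a'' : Fin n} (h' : (a':ℕ) = a + 1) (h'' : (a'':ℕ) = a + 2) :
    cyc a a' a'' a = a' := by
  rw [Fin.ext_iff, cyc_coe h' h'']; split_ifs <;> omega

lemma cyc_snd {n : ℕ} {a a' a'' : Fin n} (h' : (a':ℕ) = a + 1) (h'' : (a'':ℕ) = a + 2) :
    cyc a a' a'' a' = a'' := by
  rw [Fin.ext_iff, cyc_coe h' h'']; split_ifs <;> omega

lemma cyc_thd {n : ℕ} {a a' a'' : Fin n} (h' : (a':ℕ) = a + 1) (h'' : (a'':ℕ) = a + 2) :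
    cyc a a' a'' a'' = a := by
  rw [Fin.ext_iff, cyc_coe h' h'']; split_ifs <;> omega

lemma cyc_inversion {n : ℕ} {a a' a'' : Fin n} (h' : (a':ℕ) = a + 1) (h'' : (a'':ℕ) = a + 2)
    {p q : Fin n} (hpq : p < q) (hlt : cyc a a' a'' q < cyc a a' a'' p) :
    (p = a ∧ q = a'') ∨ (p = a' ∧ q = a'') := by
  rw [Fin.lt_def] at hpq hlt
  rw [cyc_coe h' h'', cyc_coe h' h''] at hlt
  have key : ((p:ℕ) = a ∧ (q:ℕ) = (a:ℕ)+2) ∨ ((p:ℕ) = (a:ℕ)+1 ∧ (q:ℕ) = (a:ℕ)+2) := by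
    split_ifs at hlt <;> omega
  rcases key with ⟨h1, h2⟩ | ⟨h1, h2⟩
  · exact Or.inl ⟨Fin.ext h1, Fin.ext (by omega)⟩
  · exact Or.inr ⟨Fin.ext (by omega), Fin.ext (by omega)⟩

lemma hatAct_sub {N : ℕ} (u : Perm (Fin N)) (x y : Lhat N) :
    hatAct u (x - y) = hatAct u x - hatAct u y := rfl

lemma hatAct_epsHat {N : ℕ} (u : Perm (Fin N)) (p : Fin N) :
    hatAct u (epsHat p) = epsHat (u p) := by
  funext q
  simp only [hatAct, Function.comp_apply, epsHat, Pi.single_apply, Equiv.eq_symm_apply]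
  split_ifs with h1 h2 <;> simp_all [eq_comm]

lemma wAct_sub {n₁ n₂ : ℕ} (u : Perm (Fin n₁) × Perm (Fin n₂)) (x y : L n₁ n₂) :
    wAct u (x - y) = wAct u x - wAct u y := rfl

lemma wAct_eps {n₁ n₂ : ℕ} (σ : Perm (Fin n₁)) (τ : Perm (Fin n₂)) (a : Fin n₁) :
    wAct (σ, τ) (eps a : L n₁ n₂) = eps (σ a) := by
  unfold wAct eps
  refine Prod.ext ?_ rfl
  funext q
  simp only [Function.comp_apply, Pi.single_apply, Equiv.eq_symm_apply]
  split_ifs with h1 h2 <;> simp_all [eq_comm]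

lemma wAct_eta {n₁ n₂ : ℕ} (σ : Perm (Fin n₁)) (τ : Perm (Fin n₂)) (c : Fin n₂) :
    wAct (σ, τ) (eta c : L n₁ n₂) = eta (τ c) := by
  unfold wAct eta
  refine Prod.ext rfl ?_
  funext q
  simp only [Function.comp_apply, Pi.single_apply, Equiv.eq_symm_apply]
  split_ifs with h1 h2 <;> simp_all [eq_comm]

lemma mem_PhiHat {N : ℕ} (u : Perm (Fin N)) (x : Lhat N) :
    x ∈ PhiHat u ↔ ∃ p q : Fin N, p < q ∧ u q < u p ∧ x = epsHat (u p) - epsHat (u q) := by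
  constructor
  · rintro ⟨⟨y, ⟨r, s, hrs, rfl⟩, rfl⟩, z, ⟨p, q, hpq, rfl⟩, hz⟩
    rw [hatAct_sub, hatAct_epsHat, hatAct_epsHat, neg_sub] at hz
    obtain ⟨h1, h2⟩ := epsHat_sub_eq (u.injective.ne hpq.ne) hz
    refine ⟨p, q, hpq, ?_, ?_⟩
    · rw [h1, h2]; exact hrs
    · rw [h1, h2, neg_sub]
  · rintro ⟨p, q, hpq, hlt, rfl⟩
    refine ⟨⟨epsHat (u q) - epsHat (u p), ⟨u q, u p, hlt, rfl⟩, by rw [neg_sub]⟩,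
      ⟨epsHat p - epsHat q, ⟨p, q, hpq, rfl⟩, by rw [hatAct_sub, hatAct_epsHat, hatAct_epsHat]⟩⟩

/-- Configuration E, first pair: `ŵ(k) = (i,j)`, `ŵ(k+1) = (i+1,j)`,
`ŵ(k+2) = (i+2,j)`; with `v⁻¹ = ((i i+1 i+2), 1)` and `v̂⁻¹ = ŵ (k k+1 k+2) ŵ₀`,
the sets are as indicated and `ρ` restricts to a bijection between them. -/
theorem config_E_first (n₁ n₂ : ℕ) (hn₁ : 0 < n₁) (hn₂ : 0 < n₂)
    (ρ : Lhat (n₁ * n₂) →ₗ[ℤ] L n₁ n₂)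
    (hρ : ∀ (i : Fin n₁) (j : Fin n₂), ρ (epsHat (lex i j)) = eps i + eta j)
    (wh : Perm (Fin (n₁ * n₂)))
    (k k₁ k₂ : Fin (n₁ * n₂)) (hk₁ : (k₁ : ℕ) = (k : ℕ) + 1) (hk₂ : (k₂ : ℕ) = (k : ℕ) + 2)
    (i i' i'' : Fin n₁) (hi' : (i' : ℕ) = (i : ℕ) + 1) (hi'' : (i'' : ℕ) = (i : ℕ) + 2)
    (j : Fin n₂)
    (hwk : wh k = lex i j) (hwk₁ : wh k₁ = lex i' j) (hwk₂ : wh k₂ = lex i'' j)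
    (v : Perm (Fin n₁) × Perm (Fin n₂))
    (hv : v⁻¹ = (cyc i i' i'', 1))
    (vh : Perm (Fin (n₁ * n₂)))
    (hvh : vh⁻¹ = wh * cyc k k₁ k₂ * w0 (n₁ * n₂)) :
    hatAct wh '' PhiHat ((w0 (n₁ * n₂) * (vh * wh))⁻¹) =
      {epsHat (lex i' j) - epsHat (lex i j), epsHat (lex i'' j) - epsHat (lex i j)} ∧
    Phi v⁻¹ = {(eps i' - eps i : L n₁ n₂), eps i'' - eps i} ∧
    Set.BijOn (⇑ρ) (hatAct wh '' PhiHat ((w0 (n₁ * n₂) * (vh * wh))⁻¹)) (Phi v⁻¹) := by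
  -- the permutation whose inversion set we need is just the 3-cycle
  have hc : (w0 (n₁ * n₂) * (vh * wh))⁻¹ = cyc k k₁ k₂ := by
    rw [mul_inv_rev, mul_inv_rev, hvh]
    group
  -- the inversion set of the 3-cycle
  have hset : PhiHat (cyc k k₁ k₂) = {epsHat k₁ - epsHat k, epsHat k₂ - epsHat k} := by
    ext x
    rw [mem_PhiHat]
    simp only [Set.mem_insert_iff, Set.mem_singleton_iff]
    constructor
    · rintro ⟨p, q, hpq, hlt, rfl⟩
      rcases cyc_inversion hk₁ hk₂ hpq hlt with ⟨rfl, rfl⟩ | ⟨rfl, rfl⟩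
      · left; rw [cyc_fst hk₁ hk₂, cyc_thd hk₁ hk₂]
      · right; rw [cyc_snd hk₁ hk₂, cyc_thd hk₁ hk₂]
    · rintro (rfl | rfl)
      · exact ⟨k, k₂, by rw [Fin.lt_def]; omega,
          by rw [cyc_fst hk₁ hk₂, cyc_thd hk₁ hk₂, Fin.lt_def]; omega,
          by rw [cyc_fst hk₁ hk₂, cyc_thd hk₁ hk₂]⟩
      · exact ⟨k₁, k₂, by rw [Fin.lt_def]; omega,
          by rw [cyc_snd hk₁ hk₂, cyc_thd hk₁ hk₂, Fin.lt_def]; omega,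
          by rw [cyc_snd hk₁ hk₂, cyc_thd hk₁ hk₂]⟩
  have h1 : hatAct wh '' PhiHat ((w0 (n₁ * n₂) * (vh * wh))⁻¹) =
      {epsHat (lex i' j) - epsHat (lex i j), epsHat (lex i'' j) - epsHat (lex i j)} := by
    rw [hc, hset, Set.image_pair, hatAct_sub, hatAct_sub, hatAct_epsHat, hatAct_epsHat,
      hatAct_epsHat, hwk, hwk₁, hwk₂]
  have hii' : i ≠ i' := by simp [Fin.ext_iff]; omega
  have hii'' : i ≠ i'' := by simp [Fin.ext_iff]; omega
  have hi'i'' : i' ≠ i'' := by simp [Fin.ext_iff]; omega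
  have h2 : Phi v⁻¹ = {(eps i' - eps i : L n₁ n₂), eps i'' - eps i} := by
    rw [hv]
    ext x
    simp only [Set.mem_insert_iff, Set.mem_singleton_iff]
    constructor
    · rintro ⟨⟨y, hy, rfl⟩, z, hz, hz2⟩
      rcases hy with ⟨a, b, hab, rfl⟩ | ⟨c, d, hcd, rfl⟩
      · rcases hz with ⟨a', b', hab', rfl⟩ | ⟨c', d', hcd', rfl⟩
        · rw [wAct_sub, wAct_eps, wAct_eps, neg_sub] at hz2
          obtain ⟨hb, ha⟩ := eps_sub_eq ((cyc i i' i'').injective.ne hab'.ne) hz2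
          have hlt : cyc i i' i'' b' < cyc i i' i'' a' := by rw [ha, hb]; exact hab
          rcases cyc_inversion hi' hi'' hab' hlt with ⟨rfl, rfl⟩ | ⟨rfl, rfl⟩
          · left
            rw [neg_sub, ← ha, ← hb, cyc_fst hi' hi'', cyc_thd hi' hi'']
          · right
            rw [neg_sub, ← ha, ← hb, cyc_snd hi' hi'', cyc_thd hi' hi'']
        · exfalso
          rw [wAct_sub, wAct_eta, wAct_eta, neg_sub] at hz2
          have h1' := congrArg Prod.fst hz2
          simp only [Prod.fst_sub, eta, eps, sub_zero, sub_self] at h1'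
          exact single_sub_ne_zero hab.ne' h1'.symm
      · rcases hz with ⟨a', b', hab', rfl⟩ | ⟨c', d', hcd', rfl⟩
        · exfalso
          rw [wAct_sub, wAct_eps, wAct_eps, neg_sub] at hz2
          have h1' := congrArg Prod.snd hz2
          simp only [Prod.snd_sub, eta, eps, sub_zero, sub_self] at h1'
          exact single_sub_ne_zero hcd.ne' h1'.symm
        · exfalso
          rw [wAct_sub, wAct_eta, wAct_eta, neg_sub] at hz2
          simp only [Perm.one_apply] at hz2
          obtain ⟨e1, e2⟩ := eta_sub_eq (n₁ := n₁) hcd'.ne hz2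
          rw [Fin.lt_def] at hcd hcd'
          rw [Fin.ext_iff] at e1 e2
          omega
    · rintro (rfl | rfl)
      · refine ⟨⟨eps i - eps i', Or.inl ⟨i, i', by rw [Fin.lt_def]; omega, rfl⟩, by rw [neg_sub]⟩,
          ⟨eps i - eps i'', Or.inl ⟨i, i'', by rw [Fin.lt_def]; omega, rfl⟩, ?_⟩⟩
        rw [wAct_sub, wAct_eps, wAct_eps, cyc_fst hi' hi'', cyc_thd hi' hi'']
      · refine ⟨⟨eps i - eps i'', Or.inl ⟨i, i'', by rw [Fin.lt_def]; omega, rfl⟩, by rw [neg_sub]⟩,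
          ⟨eps i' - eps i'', Or.inl ⟨i', i'', by rw [Fin.lt_def]; omega, rfl⟩, ?_⟩⟩
        rw [wAct_sub, wAct_eps, wAct_eps, cyc_snd hi' hi'', cyc_thd hi' hi'']
  refine ⟨h1, h2, ?_⟩
  rw [h1, h2]
  have r1 : ρ (epsHat (lex i' j) - epsHat (lex i j)) = eps i' - eps i := by
    rw [map_sub, hρ, hρ]; abel
  have r2 : ρ (epsHat (lex i'' j) - epsHat (lex i j)) = eps i'' - eps i := by
    rw [map_sub, hρ, hρ]; abel
  have hY : (eps i' - eps i : L n₁ n₂) ≠ eps i'' - eps i := by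
    intro h
    exact hi'i'' (eps_sub_eq hii'.symm h).1
  refine ⟨?_, ?_, ?_⟩
  · rintro x (rfl | rfl)
    · rw [r1]; exact Or.inl rfl
    · rw [r2]; exact Or.inr rfl
  · rintro x (rfl | rfl) y (rfl | rfl) h
    · rfl
    · exact absurd (r1 ▸ r2 ▸ h) hY
    · exact absurd (r1 ▸ r2 ▸ h).symm hY
    · rfl
  · rintro y (rfl | rfl)
    · exact ⟨_, Or.inl rfl, r1⟩
    · exact ⟨_, Or.inr rfl, r2⟩
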